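/- arXiv:1312.1668 — 2 statements merged into one kernel-verified Lean document; each statement's English description precedes it below -/
import Mathlib

section
/- Suppose f(r) := μ(B(x,r)) is locally absolutely continuous on (0,∞), and let q̲ = essliminf_{r→0} r f'(r)/f(r). Then every q with 0 < q < q̲ belongs to the lower Q-exponent set at x: there exist constants C_q > 0 such that μ(B(x,r))/μ(B(x,R)) ≤ C_q (r/R)^q for all 0 < r < R ≤ 1. -/
/-!
Integrating the a.e. bound `f' ρ ≥ q f(ρ) / ρ` over `[a, a e^s]` and using that `f` is increasing
gives the one-step growth `f(a e^s) ≥ (1 + q s) f(a)` for `a e^s ≤ δ`. Chaining `n` such steps of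
length `L / n`, `L = log (R / r)`, and letting `n → ∞` turns `(1 + q L / n)^n` into
`e^{q L} = (R / r)^q`, so `f(R) ≥ (R / r)^q f(r)` for `R ≤ δ`; for `δ ≤ 1`, monotonicity of `f`
extends this to `R ≤ 1` at the cost of the constant `δ^{-q}`.
-/

open MeasureTheory Metric Set Filter Topology

lemma exists_ae_Ioc_of_eventually {μ : Measure ℝ} {a : ℝ} {p : ℝ → Prop}
    (h : ∀ᶠ x in ae μ ⊓ 𝓝[>] a, p x) : ∃ δ > a, ∀ᵐ x ∂μ, x ∈ Ioc a δ → p x := by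
  obtain ⟨s, hs, t, ht, hst⟩ := eventually_inf.1 h
  obtain ⟨δ, hδ, hδt⟩ := mem_nhdsGT_iff_exists_Ioc_subset.1 ht
  exact ⟨δ, hδ, by filter_upwards [hs] with x hxs hx using hst x ⟨hxs, hδt hx⟩⟩

section

open Real

variable {f f' : ℝ → ℝ} {q δ : ℝ}

lemma one_add_mul_mul_le_of_ae_le_mul_deriv_div (hmono : MonotoneOn f (Ioi 0))
    (hfpos : ∀ r, 0 < r → 0 < f r)
    (hint : ∀ a b, 0 < a → a ≤ b → IntervalIntegrable f' volume a b)
    (hftc : ∀ a b, 0 < a → a ≤ b → f b - f a = ∫ ρ in a..b, f' ρ) (hq : 0 ≤ q)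
    (hae : ∀ᵐ ρ, ρ ∈ Ioc 0 δ → q ≤ ρ * f' ρ / f ρ)
    {a s : ℝ} (ha : 0 < a) (hs : 0 ≤ s) (hδ : a * exp s ≤ δ) :
    (1 + q * s) * f a ≤ f (a * exp s) := by
  set b := a * exp s
  have hab : a ≤ b := le_mul_of_one_le_right ha.le (one_le_exp hs)
  have hb : 0 < b := ha.trans_le hab
  have hbound : ∀ᵐ ρ ∂volume.restrict (Icc a b), q * f a * ρ⁻¹ ≤ f' ρ := by
    rw [ae_restrict_iff' measurableSet_Icc]
    filter_upwards [hae] with ρ hρq hρab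
    have hρ : 0 < ρ := ha.trans_le hρab.1
    have hq' : q * f ρ ≤ ρ * f' ρ :=
      (le_div_iff₀ (hfpos ρ hρ)).1 (hρq ⟨hρ, hρab.2.trans hδ⟩)
    have hfa : f a ≤ f ρ := hmono ha hρ hρab.1
    rw [← div_eq_mul_inv, div_le_iff₀ hρ]
    nlinarith
  have hint_inv : IntervalIntegrable (fun ρ => q * f a * ρ⁻¹) volume a b :=
    (intervalIntegrable_inv_iff.2 (Or.inr (notMem_uIcc_of_lt ha hb))).const_mul _
  have hlog : ∫ ρ in a..b, q * f a * ρ⁻¹ = q * f a * s := by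
    rw [intervalIntegral.integral_const_mul, integral_inv_of_pos ha hb,
      mul_div_cancel_left₀ _ ha.ne', log_exp]
  have hint_le := intervalIntegral.integral_mono_ae_restrict hab hint_inv (hint a b ha hab) hbound
  linarith [hftc a b ha hab]

lemma one_add_mul_pow_mul_le_of_one_add_mul_mul_le
    (hstep : ∀ a s, 0 < a → 0 ≤ s → a * exp s ≤ δ → (1 + q * s) * f a ≤ f (a * exp s))
    (hq : 0 ≤ q) {r s : ℝ} (hr : 0 < r) (hs : 0 ≤ s) :
    ∀ k : ℕ, r * exp (k * s) ≤ δ → (1 + q * s) ^ k * f r ≤ f (r * exp (k * s))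
  | 0, _ => by simp
  | k + 1, hk => by
    have hexp : r * exp ((k + 1 : ℕ) * s) = r * exp (k * s) * exp s := by
      push_cast; rw [mul_assoc, ← exp_add]; ring_nf
    have hk' : r * exp (k * s) ≤ δ := by
      refine le_trans ?_ hk
      gcongr
      exact_mod_cast Nat.le_succ k
    calc (1 + q * s) ^ (k + 1) * f r = (1 + q * s) * ((1 + q * s) ^ k * f r) := by ring
      _ ≤ (1 + q * s) * f (r * exp (k * s)) := by
        gcongr
        exact one_add_mul_pow_mul_le_of_one_add_mul_mul_le hstep hq hr hs k hk'
      _ ≤ f (r * exp ((k + 1 : ℕ) * s)) :=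
        hexp ▸ hstep _ s (by positivity) hs (hexp ▸ hk)

lemma div_rpow_mul_le_of_one_add_mul_mul_le
    (hstep : ∀ a s, 0 < a → 0 ≤ s → a * exp s ≤ δ → (1 + q * s) * f a ≤ f (a * exp s))
    (hq : 0 ≤ q) {r R : ℝ} (hr : 0 < r) (hrR : r ≤ R) (hR : R ≤ δ) :
    (R / r) ^ q * f r ≤ f R := by
  have hRr : 0 < R / r := div_pos (hr.trans_le hrR) hr
  set L := log (R / r)
  have hL : 0 ≤ L := log_nonneg ((one_le_div hr).2 hrR)
  have hrL : r * exp L = R := by rw [exp_log hRr]; field_simp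
  have hchain : ∀ n : ℕ, n ≠ 0 → (1 + q * L / n) ^ n * f r ≤ f R := fun n hn => by
    have hn' : (n : ℝ) * (L / n) = L := mul_div_cancel₀ L (Nat.cast_ne_zero.2 hn)
    have hsteps := one_add_mul_pow_mul_le_of_one_add_mul_mul_le hstep hq hr (by positivity) n
      (hn' ▸ hrL ▸ hR)
    rwa [hn', hrL, ← mul_div_assoc] at hsteps
  have hlim := (tendsto_one_add_div_pow_exp (q * L)).mul_const (f r)
  rw [rpow_def_of_pos hRr, mul_comm L]
  exact le_of_tendsto hlim (eventually_ne_atTop 0 |>.mono hchain)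

lemma mul_div_rpow_mul_le_of_div_rpow_mul_le (hmono : MonotoneOn f (Ioi 0))
    (hnonneg : ∀ r, 0 < r → 0 ≤ f r) (hq : 0 ≤ q) (hδ : 0 ≤ δ) (hδ1 : δ ≤ 1)
    (hloc : ∀ r R, 0 < r → r ≤ R → R ≤ δ → (R / r) ^ q * f r ≤ f R)
    {r R : ℝ} (hr : 0 < r) (hrR : r ≤ R) (hR : R ≤ 1) :
    (δ * (R / r)) ^ q * f r ≤ f R := by
  have hR0 : 0 < R := hr.trans_le hrR
  rcases le_or_gt r δ with hrδ | hδr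
  · calc (δ * (R / r)) ^ q * f r ≤ (min R δ / r) ^ q * f r := by
          gcongr
          · exact hnonneg r hr
          · rw [mul_div_assoc']
            gcongr
            exact le_min (mul_le_of_le_one_left hR0.le hδ1) (mul_le_of_le_one_right hδ hR)
      _ ≤ f (min R δ) := hloc r _ hr (le_min hrR hrδ) (min_le_right _ _)
      _ ≤ f R := hmono (lt_min hR0 (hr.trans_le hrδ)) hR0 (min_le_left _ _)
  · calc (δ * (R / r)) ^ q * f r ≤ 1 * f r := by
          gcongr
          · exact hnonneg r hr
          · refine rpow_le_one (by positivity) ?_ hq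
            rw [mul_div_assoc', div_le_one hr]
            exact (mul_le_of_le_one_right hδ hR).trans hδr.le
      _ ≤ f R := by rw [one_mul]; exact hmono hr hR0 hrR

end

theorem lowerQ_from_essliminf_general {X : Type*} [MetricSpace X] [MeasurableSpace X] (μ : Measure X)
    (hfin : ∀ (y : X) (r : ℝ), 0 < r → μ (ball y r) < ⊤)
    (x : X) (f f' : ℝ → ℝ)
    (hf : ∀ r : ℝ, 0 < r → f r = (μ (ball x r)).toReal)
    (hfpos : ∀ r : ℝ, 0 < r → 0 < f r)
    (hint : ∀ a b : ℝ, 0 < a → a ≤ b → IntervalIntegrable f' volume a b)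
    (hftc : ∀ a b : ℝ, 0 < a → a ≤ b → f b - f a = ∫ ρ in a..b, f' ρ)
    (qlow : ℝ)
    (hqlow : qlow = liminf (fun ρ : ℝ => ρ * f' ρ / f ρ)
      ((MeasureTheory.ae (volume : Measure ℝ)) ⊓ nhdsWithin 0 (Set.Ioi 0)))
    (q : ℝ) (hq : 0 < q) (hq' : q < qlow) :
    ∃ C : ℝ, 0 < C ∧ ∀ r R : ℝ, 0 < r → r < R → R ≤ 1 →
      (μ (ball x r)).toReal ≤ C * (r / R) ^ q * (μ (ball x R)).toReal := by
  have hmono : MonotoneOn f (Ioi 0) := fun a ha b hb hab => by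
    rw [hf a ha, hf b hb]
    exact ENNReal.toReal_mono (hfin x b hb).ne (measure_mono (ball_subset_ball hab))
  -- otherwise the liminf would take the junk value `0`, which is not above `q`
  have hbdd : IsBoundedUnder (· ≥ ·) (ae volume ⊓ 𝓝[>] 0) fun ρ => ρ * f' ρ / f ρ := by
    by_contra h
    rw [Real.liminf_of_not_isBoundedUnder h] at hqlow
    linarith
  obtain ⟨δ, hδ, hae⟩ :=
    exists_ae_Ioc_of_eventually (eventually_lt_of_lt_liminf (hqlow ▸ hq') hbdd)
  have hstep a s (ha : 0 < a) (hs : 0 ≤ s) (haδ : a * Real.exp s ≤ δ) :=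
    one_add_mul_mul_le_of_ae_le_mul_deriv_div hmono hfpos hint hftc hq.le
      (hae.mono fun ρ h hρ => (h hρ).le) ha hs haδ
  have hloc r R (hr : 0 < r) (hrR : r ≤ R) (hR : R ≤ min δ 1) : (R / r) ^ q * f r ≤ f R :=
    div_rpow_mul_le_of_one_add_mul_mul_le hstep hq.le hr hrR (hR.trans (min_le_left _ _))
  refine ⟨(min δ 1)⁻¹ ^ q, by positivity, fun r R hr hrR hR => ?_⟩
  have hR0 : 0 < R := hr.trans hrR
  rw [← hf r hr, ← hf R hR0, ← Real.mul_rpow (by positivity) (by positivity),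
    ← inv_div R r, ← mul_inv, Real.inv_rpow (by positivity), inv_mul_eq_div,
    le_div_iff₀' (by positivity)]
  exact mul_div_rpow_mul_le_of_div_rpow_mul_le hmono (fun r hr => (hfpos r hr).le) hq.le
    (by positivity) (min_le_right δ 1) hloc hr hrR.le hR

theorem lowerQ_from_essliminf {X : Type*} [MetricSpace X] [MeasurableSpace X] [BorelSpace X] (μ : Measure X)
    (hpos : ∀ (y : X) (r : ℝ), 0 < r → 0 < μ (ball y r))
    (hfin : ∀ (y : X) (r : ℝ), 0 < r → μ (ball y r) < ⊤)
    (x : X) (f f' : ℝ → ℝ)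
    (hf : ∀ r : ℝ, 0 < r → f r = (μ (ball x r)).toReal)
    (hfpos : ∀ r : ℝ, 0 < r → 0 < f r)
    (hint : ∀ a b : ℝ, 0 < a → a ≤ b → IntervalIntegrable f' volume a b)
    (hftc : ∀ a b : ℝ, 0 < a → a ≤ b → f b - f a = ∫ ρ in a..b, f' ρ)
    (qlow : ℝ)
    (hqlow : qlow = liminf (fun ρ : ℝ => ρ * f' ρ / f ρ)
      ((MeasureTheory.ae (volume : Measure ℝ)) ⊓ nhdsWithin 0 (Set.Ioi 0)))
    (q : ℝ) (hq : 0 < q) (hq' : q < qlow) :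
    ∃ C : ℝ, 0 < C ∧ ∀ r R : ℝ, 0 < r → r < R → R ≤ 1 →
      (μ (ball x r)).toReal ≤ C * (r / R) ^ q * (μ (ball x R)).toReal :=
  lowerQ_from_essliminf_general μ hfin x f f' hf hfpos hint hftc qlow hqlow q hq hq'
end

section
/- Under the same hypotheses as the previous statement (k locally absolutely continuous increasing homeomorphism of [0,∞) with m ≤ ρk'(ρ)/k(ρ) ≤ M a.e.), the radial stretching F(x) = (k(|x|)/|x|)x, F(0)=0, satisfies the lower distortion bound |F(x) − F(y)| ≥ (m/(1+2m)) · inf_{|x| ≤ ξ ≤ |y|} (k(ξ)/ξ) · |x − y| for all x, y ∈ ℝⁿ with |x| ≤ |y|, x ≠ y. -/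
/-! Write `a = ‖x‖ ≤ b = ‖y‖`, `α = k a / a`, `β = k b / b` and `λ` for the infimum of `k ξ / ξ`.
Then `‖α x - β y‖² = (β b - α a)² + 2αβ (a b - ⟪x, y⟫)` and
`‖x - y‖² = (b - a)² + 2 (a b - ⟪x, y⟫)`. Integrating `k' ρ ≥ m k(ρ) / ρ ≥ m λ` gives
`β b - α a = k b - k a ≥ m λ (b - a)`, and `αβ ≥ λ²`; so for any `c ≤ min 1 m`, in particular
`c = m / (1 + 2m)`, each term of the first sum is at least `(c λ)²` times the matching one of the
second. -/

open MeasureTheory Set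

theorem mul_norm_sub_le_norm_smul_sub_smul {E : Type*} [NormedAddCommGroup E]
    [InnerProductSpace ℝ E] {x y : E} {α β μ : ℝ} (hμ : 0 ≤ μ) (hαβ : μ ^ 2 ≤ α * β)
    (hxy : ‖x‖ ≤ ‖y‖) (hgrowth : μ * (‖y‖ - ‖x‖) ≤ β * ‖y‖ - α * ‖x‖) :
    μ * ‖x - y‖ ≤ ‖α • x - β • y‖ := by
  have hsq_growth : (μ * (‖y‖ - ‖x‖)) ^ 2 ≤ (β * ‖y‖ - α * ‖x‖) ^ 2 :=
    pow_le_pow_left₀ (mul_nonneg hμ (sub_nonneg.mpr hxy)) hgrowth 2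
  have hangle : 0 ≤ (α * β - μ ^ 2) * (‖x‖ * ‖y‖ - inner ℝ x y) :=
    mul_nonneg (sub_nonneg.mpr hαβ) (sub_nonneg.mpr (real_inner_le_norm x y))
  have hsq : (μ * ‖x - y‖) ^ 2 ≤ ‖α • x - β • y‖ ^ 2 := by
    rw [mul_pow, norm_sub_sq_real, norm_sub_sq_real, norm_smul, norm_smul,
      real_inner_smul_left, real_inner_smul_right, mul_pow, mul_pow, Real.norm_eq_abs,
      Real.norm_eq_abs, sq_abs, sq_abs]
    linarith
  exact (pow_le_pow_iff_left₀ (mul_nonneg hμ (norm_nonneg _)) (norm_nonneg _) two_ne_zero).mp hsq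

theorem mul_norm_sub_le_norm_radial_sub {E : Type*} [NormedAddCommGroup E]
    [InnerProductSpace ℝ E] {k : ℝ → ℝ} (hk0 : k 0 = 0) {x y : E} {μ : ℝ} (hμ : 0 ≤ μ)
    (hxy : ‖x‖ ≤ ‖y‖) (hx : x ≠ 0 → μ * ‖x‖ ≤ k ‖x‖)
    (hgrowth : μ * (‖y‖ - ‖x‖) ≤ k ‖y‖ - k ‖x‖) :
    μ * ‖x - y‖ ≤ ‖(k ‖x‖ / ‖x‖) • x - (k ‖y‖ / ‖y‖) • y‖ := by
  rcases eq_or_ne y 0 with rfl | hy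
  · obtain rfl : x = 0 := norm_le_zero_iff.mp (by simpa using hxy)
    simp
  have hb : 0 < ‖y‖ := norm_pos_iff.mpr hy
  have hβ : k ‖y‖ / ‖y‖ * ‖y‖ = k ‖y‖ := div_mul_cancel₀ _ hb.ne'
  rcases eq_or_ne x 0 with rfl | hx0
  · -- The junk coefficient `k 0 / 0 = 0` is useless; as `x = 0`, take the one of `y` instead.
    have hμβ : μ ≤ k ‖y‖ / ‖y‖ := by
      rw [le_div_iff₀ hb]
      simpa [hk0] using hgrowth
    have := mul_norm_sub_le_norm_smul_sub_smul (x := (0 : E)) (y := y)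
      hμ (pow_le_pow_left₀ hμ hμβ 2 |>.trans_eq (sq _)) hxy (by simpa [hβ, hk0] using hgrowth)
    simpa using this
  have ha : 0 < ‖x‖ := norm_pos_iff.mpr hx0
  have hμα : μ ≤ k ‖x‖ / ‖x‖ := (le_div_iff₀ ha).mpr (hx hx0)
  have hμβ : μ ≤ k ‖y‖ / ‖y‖ := by
    rw [le_div_iff₀ hb]
    linarith [hx hx0]
  refine mul_norm_sub_le_norm_smul_sub_smul hμ ?_ hxy ?_
  · rw [sq]
    exact mul_le_mul hμα hμβ hμ (hμ.trans hμα)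
  · rwa [hβ, div_mul_cancel₀ _ ha.ne']

theorem mul_mul_sub_le_sub_of_le_mul_deriv_div {k k' : ℝ → ℝ} {m μ a b : ℝ} (hm : 0 ≤ m)
    (ha : 0 ≤ a) (hab : a ≤ b) (hint : IntervalIntegrable k' volume a b)
    (hftc : k b - k a = ∫ ρ in a..b, k' ρ)
    (hbound : ∀ᵐ ρ ∂(volume.restrict (Ioi 0)), m ≤ ρ * k' ρ / k ρ)
    (hkpos : ∀ ρ ∈ Ioc a b, 0 < k ρ) (hμ : ∀ ρ ∈ Ioc a b, μ * ρ ≤ k ρ) :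
    m * μ * (b - a) ≤ k b - k a := by
  have hderiv : ∀ᵐ ρ ∂(volume.restrict (Ioc a b)), m * μ ≤ k' ρ := by
    filter_upwards [ae_restrict_of_ae_restrict_of_subset (fun ρ hρ => ha.trans_lt hρ.1) hbound,
      ae_restrict_mem measurableSet_Ioc] with ρ hρm hρ
    have hρ0 : 0 < ρ := ha.trans_lt hρ.1
    have hmk : m * k ρ ≤ ρ * k' ρ := (le_div_iff₀ (hkpos ρ hρ)).mp hρm
    have hmμ : ρ * (m * μ) ≤ ρ * k' ρ := by linarith [mul_le_mul_of_nonneg_left (hμ ρ hρ) hm]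
    exact le_of_mul_le_mul_left hmμ hρ0
  calc m * μ * (b - a) = ∫ _ in a..b, m * μ := by
        simp only [intervalIntegral.integral_const, smul_eq_mul]; ring
    _ ≤ ∫ ρ in a..b, k' ρ := by
      rw [intervalIntegral.integral_of_le hab, intervalIntegral.integral_of_le hab]
      exact setIntegral_mono_ae_restrict (integrableOn_const measure_Ioc_lt_top.ne) hint.1 hderiv
    _ = k b - k a := hftc.symm

theorem radial_stretching_lower_bound_general (n : ℕ)
    (k k' : ℝ → ℝ) (m M : ℝ) (hm : 0 < m)
    (hk0 : k 0 = 0)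
    (hmono : StrictMonoOn k (Set.Ici 0))
    (hint : ∀ a b : ℝ, 0 ≤ a → a ≤ b → IntervalIntegrable k' volume a b)
    (hftc : ∀ a b : ℝ, 0 ≤ a → a ≤ b → k b - k a = ∫ ρ in a..b, k' ρ)
    (hbound : ∀ᵐ ρ ∂(volume.restrict (Set.Ioi (0:ℝ))),
      m ≤ ρ * k' ρ / k ρ ∧ ρ * k' ρ / k ρ ≤ M)
    (F : EuclideanSpace ℝ (Fin n) → EuclideanSpace ℝ (Fin n))
    (hF : ∀ z : EuclideanSpace ℝ (Fin n), F z = (k ‖z‖ / ‖z‖) • z)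
    (x y : EuclideanSpace ℝ (Fin n)) (hxy : ‖x‖ ≤ ‖y‖) :
    (m / (1 + 2 * m)) *
        sInf ((fun ξ => k ξ / ξ) '' (Set.Ioc 0 ‖y‖ ∩ Set.Icc ‖x‖ ‖y‖)) *
        ‖x - y‖ ≤ ‖F x - F y‖ := by
  set S := (fun ξ => k ξ / ξ) '' (Ioc 0 ‖y‖ ∩ Icc ‖x‖ ‖y‖)
  have hkpos : ∀ ξ, 0 < ξ → 0 < k ξ := fun ξ hξ => hk0 ▸ hmono self_mem_Ici hξ.le hξ
  have hS : ∀ r ∈ S, 0 ≤ r := by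
    rintro _ ⟨ξ, ⟨⟨hξ, -⟩, -⟩, rfl⟩
    exact div_nonneg (hkpos ξ hξ).le hξ.le
  have hlam0 : 0 ≤ sInf S := Real.sInf_nonneg hS
  have hlam : ∀ ξ ∈ Ioc 0 ‖y‖ ∩ Icc ‖x‖ ‖y‖, sInf S * ξ ≤ k ξ := fun ξ hξ =>
    (le_div_iff₀ hξ.1.1).mp (csInf_le ⟨0, hS⟩ ⟨ξ, hξ, rfl⟩)
  have hgrowth : m * sInf S * (‖y‖ - ‖x‖) ≤ k ‖y‖ - k ‖x‖ :=
    mul_mul_sub_le_sub_of_le_mul_deriv_div hm.le (norm_nonneg x) hxy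
      (hint _ _ (norm_nonneg x) hxy) (hftc _ _ (norm_nonneg x) hxy)
      (hbound.mono fun _ h => h.1)
      (fun ρ hρ => hkpos ρ ((norm_nonneg x).trans_lt hρ.1))
      (fun ρ hρ => hlam ρ ⟨⟨(norm_nonneg x).trans_lt hρ.1, hρ.2⟩, hρ.1.le, hρ.2⟩)
  have hc1 : m / (1 + 2 * m) ≤ 1 := by rw [div_le_one (by positivity)]; linarith
  have hcm : m / (1 + 2 * m) ≤ m := div_le_self hm.le (by linarith)
  rw [hF, hF]
  refine mul_norm_sub_le_norm_radial_sub hk0 (by positivity) hxy (fun hx => ?_) ?_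
  · have ha : 0 < ‖x‖ := norm_pos_iff.mpr hx
    have hax := hlam ‖x‖ ⟨⟨ha, hxy⟩, le_rfl, hxy⟩
    linarith [mul_le_mul_of_nonneg_right hc1 (mul_nonneg hlam0 ha.le)]
  · linarith [mul_le_mul_of_nonneg_right hcm (mul_nonneg hlam0 (sub_nonneg.mpr hxy))]

theorem radial_stretching_lower_bound (n : ℕ) (hn : 2 ≤ n)
    (k k' : ℝ → ℝ) (m M : ℝ) (hm : 0 < m) (hmM : m ≤ M)
    (hk0 : k 0 = 0)
    (hmono : StrictMonoOn k (Set.Ici 0))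
    (hbij : Set.BijOn k (Set.Ici 0) (Set.Ici 0))
    (hint : ∀ a b : ℝ, 0 ≤ a → a ≤ b → IntervalIntegrable k' volume a b)
    (hftc : ∀ a b : ℝ, 0 ≤ a → a ≤ b → k b - k a = ∫ ρ in a..b, k' ρ)
    (hbound : ∀ᵐ ρ ∂(volume.restrict (Set.Ioi (0:ℝ))),
      m ≤ ρ * k' ρ / k ρ ∧ ρ * k' ρ / k ρ ≤ M)
    (F : EuclideanSpace ℝ (Fin n) → EuclideanSpace ℝ (Fin n))
    (hF : ∀ z : EuclideanSpace ℝ (Fin n), F z = (k ‖z‖ / ‖z‖) • z)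
    (x y : EuclideanSpace ℝ (Fin n)) (hxy : ‖x‖ ≤ ‖y‖) (hne : x ≠ y) :
    (m / (1 + 2 * m)) *
        sInf ((fun ξ => k ξ / ξ) '' (Set.Ioc 0 ‖y‖ ∩ Set.Icc ‖x‖ ‖y‖)) *
        ‖x - y‖ ≤ ‖F x - F y‖ :=
  radial_stretching_lower_bound_general n k k' m M hm hk0 hmono hint hftc hbound F hF x y hxy
end
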